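/- arXiv:1905.06214 — 3 statements merged into one kernel-verified Lean document; each statement's English description precedes it below -/
import Mathlib

section
/- Let U be a nonempty finite index set, K a nonempty finite type, and r : (U → K) → ℝ a probability mass function with r(y) > 0 for all y and ∑_y r(y) = 1. For each m ∈ U let q_m : K → ℝ be a probability mass function with q_m(k) > 0 for all k and ∑_k q_m(k) = 1, and let q(y) = ∏_{m∈U} q_m(y_m). Fix n ∈ U and for k ∈ K set log F(k) = ∑_{z : (U∖{n}) → K} (∏_{m≠n} q_m(z_m)) · log r(z ∪ {n ↦ k}). Then the negative KL divergence decomposes as ∑_y q(y) · (log r(y) − log q(y)) = ∑_{k∈K} q_n(k) · log F(k) − ∑_{k∈K} q_n(k) · log q_n(k) + C, where C = −∑_{m∈U, m≠n} ∑_{k∈K} q_m(k) · log q_m(k) does not depend on q_n. -/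
/-!
Splitting a configuration `y` into its value `k` at `n` and its restriction `z` to the other
coordinates factors the mean-field weight as `q n k * P z`, where `P` is the product distribution of
the remaining factors. Expanding `log (q n k * P z)`, the cross term integrates to `logF`, the
`log (q n k)` term leaves the entropy of `q n` because `P` sums to one, and the `log (P z)` term is
the entropy of the product `P`, which is the sum of the entropies of its factors.
-/

open Finset

section ExtendAt

variable {ι K : Type*} [DecidableEq ι]

/-- The configuration `z ∪ {n ↦ k}`. -/
def extendAt (n : ι) (z : {m // m ≠ n} → K) (k : K) : ι → K :=
  fun m => if h : m = n then k else z ⟨m, h⟩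

@[simp]
theorem extendAt_self (n : ι) (z : {m // m ≠ n} → K) (k : K) : extendAt n z k n = k :=
  dif_pos rfl

theorem extendAt_of_ne {n m : ι} (z : {m // m ≠ n} → K) (k : K) (h : m ≠ n) :
    extendAt n z k m = z ⟨m, h⟩ :=
  dif_neg h

variable [Fintype ι]

theorem prod_extendAt {M : Type*} [CommMonoid M] (n : ι) (g : ι → K → M)
    (z : {m // m ≠ n} → K) (k : K) :
    ∏ m, g m (extendAt n z k m) = g n k * ∏ m : {m // m ≠ n}, g m (z m) := by
  rw [Fintype.prod_eq_mul_prod_subtype_ne _ n, extendAt_self]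
  congr 1
  exact Fintype.prod_congr _ _ fun m => by rw [extendAt_of_ne z k m.2]

theorem sum_eq_sum_sum_extendAt [Fintype K] {M : Type*} [AddCommMonoid M] (n : ι)
    (f : (ι → K) → M) : ∑ y, f y = ∑ k, ∑ z, f (extendAt n z k) := by
  rw [← (Equiv.funSplitAt n K).symm.sum_comp, Fintype.sum_prod_type]
  refine sum_congr rfl fun k _ => sum_congr rfl fun z _ => congrArg f (funext fun m => ?_)
  by_cases h : m = n
  · subst h; simp
  · simp [extendAt_of_ne z k h, h]

end ExtendAt

section ProductDistribution

variable {ι K : Type*} [Fintype ι] [DecidableEq ι] [Fintype K]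

theorem sum_prod_eq_one {R : Type*} [CommSemiring R] (p : ι → K → R)
    (hp1 : ∀ m, ∑ k, p m k = 1) : ∑ z : ι → K, ∏ m, p m (z m) = 1 := by
  rw [← Fintype.prod_sum]
  simp [hp1]

theorem sum_prod_mul_eval {R : Type*} [CommSemiring R] (p : ι → K → R)
    (hp1 : ∀ m, ∑ k, p m k = 1) (i : ι) (f : K → R) :
    ∑ z : ι → K, (∏ m, p m (z m)) * f (z i) = ∑ k, p i k * f k := by
  rw [sum_eq_sum_sum_extendAt i]
  refine sum_congr rfl fun k _ => ?_
  simp only [prod_extendAt, extendAt_self, mul_right_comm _ _ (f k), ← mul_sum]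
  rw [sum_prod_eq_one (fun m : {m // m ≠ i} => p m) fun m => hp1 m, mul_one]

theorem sum_prod_mul_log_prod (p : ι → K → ℝ) (hp : ∀ m k, p m k ≠ 0)
    (hp1 : ∀ m, ∑ k, p m k = 1) :
    ∑ z : ι → K, (∏ m, p m (z m)) * Real.log (∏ m, p m (z m))
      = ∑ m, ∑ k, p m k * Real.log (p m k) := by
  simp only [Real.log_prod fun m _ => hp m _, mul_sum]
  rw [sum_comm]
  exact sum_congr rfl fun m _ => sum_prod_mul_eval p hp1 m fun k => Real.log (p m k)

end ProductDistribution

theorem meanfield_kl_decomposition_general {U : Type*} [Fintype U] [DecidableEq U]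
    {K : Type*} [Fintype K]
    (r : (U → K) → ℝ)
    (q : U → K → ℝ) (hq : ∀ m k, 0 < q m k) (hq1 : ∀ m, ∑ k, q m k = 1)
    (n : U) :
    let ext : ({m : U // m ≠ n} → K) → K → (U → K) := fun z k m =>
      if h : m = n then k else z ⟨m, h⟩
    let logF : K → ℝ := fun k =>
      ∑ z : {m : U // m ≠ n} → K, (∏ m, q m.1 (z m)) * Real.log (r (ext z k))
    ∑ y : U → K, (∏ m, q m (y m)) * (Real.log (r y) - Real.log (∏ m, q m (y m)))
      = ∑ k, q n k * logF k - ∑ k, q n k * Real.log (q n k)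
        + (- ∑ m ∈ Finset.univ.filter (fun m => m ≠ n), ∑ k, q m k * Real.log (q m k)) := by
  intro ext logF
  set P : ({m : U // m ≠ n} → K) → ℝ := fun z => ∏ m, q m.1 (z m)
  have hprod : ∀ z k, ∏ m, q m (extendAt n z k m) = q n k * P z := prod_extendAt n q
  have hP1 : ∑ z, P z = 1 := sum_prod_eq_one (fun m : {m // m ≠ n} => q m) fun m => hq1 m
  have hP_entropy : ∑ z, P z * Real.log (P z)
      = ∑ m : {m // m ≠ n}, ∑ k, q m k * Real.log (q m k) :=
    sum_prod_mul_log_prod (fun m : {m // m ≠ n} => q m) (fun m k => (hq m k).ne') fun m => hq1 m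
  have hlogF : ∀ k, logF k = ∑ z, P z * Real.log (r (extendAt n z k)) := fun k => rfl
  have hterm : ∀ k z, (q n k * P z) * (Real.log (r (extendAt n z k)) - Real.log (q n k * P z))
      = q n k * (P z * Real.log (r (extendAt n z k))) - P z * (q n k * Real.log (q n k))
        - q n k * (P z * Real.log (P z)) := fun k z => by
    rw [Real.log_mul (hq n k).ne' (prod_pos fun m _ => hq m.1 (z m)).ne']
    ring
  rw [sum_eq_sum_sum_extendAt n, sum_subtype (p := fun m => m ≠ n) _ (by simp)]
  simp only [hprod, hterm, sum_sub_distrib, ← mul_sum, ← sum_mul, hlogF, hP1, hP_entropy, hq1,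
    one_mul]
  ring

/-- Decomposition of the negative KL divergence between a mean-field distribution
`q(y) = ∏_{m ∈ U} q m (y m)` and a strictly positive distribution `r` with respect
to a fixed coordinate `n`:
`∑ y, q(y) (log r(y) - log q(y)) = ∑ k, q n k * log F k - ∑ k, q n k * log (q n k) + C`,
where `log F k = E_{z ∼ ∏_{m ≠ n} q m} [log r (z ∪ {n ↦ k})]` and
`C = -∑_{m ≠ n} ∑ k, q m k * log (q m k)` does not depend on `q n`. -/
theorem meanfield_kl_decomposition {U : Type*} [Fintype U] [DecidableEq U] [Nonempty U]
    {K : Type*} [Fintype K] [Nonempty K]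
    (r : (U → K) → ℝ) (hr : ∀ y, 0 < r y) (hr1 : ∑ y, r y = 1)
    (q : U → K → ℝ) (hq : ∀ m k, 0 < q m k) (hq1 : ∀ m, ∑ k, q m k = 1)
    (n : U) :
    let ext : ({m : U // m ≠ n} → K) → K → (U → K) := fun z k m =>
      if h : m = n then k else z ⟨m, h⟩
    let logF : K → ℝ := fun k =>
      ∑ z : {m : U // m ≠ n} → K, (∏ m, q m.1 (z m)) * Real.log (r (ext z k))
    ∑ y : U → K, (∏ m, q m (y m)) * (Real.log (r y) - Real.log (∏ m, q m (y m)))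
      = ∑ k, q n k * logF k - ∑ k, q n k * Real.log (q n k)
        + (- ∑ m ∈ Finset.univ.filter (fun m => m ≠ n), ∑ k, q m k * Real.log (q m k)) :=
  meanfield_kl_decomposition_general r q hq hq1 n
end

section
/- Let U be a nonempty finite index set, K a nonempty finite type, and r : (U → K) → ℝ a strictly positive probability mass function. For each m ∈ U with m ≠ n let q_m : K → ℝ be a fixed strictly positive probability mass function, and for a candidate strictly positive probability mass function s : K → ℝ define Φ(s) = ∑_{y : U → K} (s(y_n) · ∏_{m≠n} q_m(y_m)) · (log r(y) − log(s(y_n) · ∏_{m≠n} q_m(y_m))). Then Φ attains its maximum over all strictly positive probability mass functions on K at a unique point s = q_n*, given by q_n*(k) = F(k) / (∑_{k'∈K} F(k')), where log F(k) = ∑_{z : (U∖{n}) → K} (∏_{m≠n} q_m(z_m)) · log r(z ∪ {n ↦ k}). Equivalently, log q_n*(k) = E_{z ∼ ∏_{m≠n} q_m}[log r(z ∪ {n ↦ k})] + const, where the constant is independent of k. -/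
open Finset

/-- Optimality condition for a mean-field coordinate update: the negative KL
divergence `Φ s` between the mean-field distribution `y ↦ s (y n) * ∏_{m ≠ n} q m (y m)`
and a strictly positive distribution `r` attains its maximum over strictly positive
probability mass functions `s` on `K` at the unique point
`q_n*(k) = F k / ∑ k', F k'`, where
`log F k = E_{z ∼ ∏_{m ≠ n} q m} [log r (z ∪ {n ↦ k})]`; equivalently,
`log q_n*(k) = log F k + const` with the constant independent of `k`. -/
theorem meanfield_unique_maximizer {U : Type*} [Fintype U] [DecidableEq U] [Nonempty U]
    {K : Type*} [Fintype K] [Nonempty K]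
    (r : (U → K) → ℝ) (hr : ∀ y, 0 < r y) (hr1 : ∑ y, r y = 1)
    (n : U)
    (q : U → K → ℝ) (hq : ∀ m, m ≠ n → ∀ k, 0 < q m k)
    (hq1 : ∀ m, m ≠ n → ∑ k, q m k = 1) :
    let ext : ({m : U // m ≠ n} → K) → K → (U → K) := fun z k m =>
      if h : m = n then k else z ⟨m, h⟩
    let logF : K → ℝ := fun k =>
      ∑ z : {m : U // m ≠ n} → K, (∏ m, q m.1 (z m)) * Real.log (r (ext z k))
    let F : K → ℝ := fun k => Real.exp (logF k)
    let qstar : K → ℝ := fun k => F k / ∑ k', F k'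
    let Φ : (K → ℝ) → ℝ := fun s =>
      ∑ y : U → K,
        (s (y n) * ∏ m ∈ Finset.univ.filter (fun m => m ≠ n), q m (y m)) *
          (Real.log (r y)
            - Real.log (s (y n) * ∏ m ∈ Finset.univ.filter (fun m => m ≠ n), q m (y m)))
    ((∀ k, 0 < qstar k) ∧ ∑ k, qstar k = 1) ∧
      (∀ s : K → ℝ, (∀ k, 0 < s k) → ∑ k, s k = 1 → Φ s ≤ Φ qstar) ∧
      (∀ s : K → ℝ, (∀ k, 0 < s k) → ∑ k, s k = 1 → Φ s = Φ qstar → s = qstar) ∧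
      (∃ c : ℝ, ∀ k, Real.log (qstar k) = logF k + c) := by
  intro ext logF F qstar Φ
  set T : ℝ := ∑ k', F k' with hTdef
  have hF : ∀ k, 0 < F k := fun k => Real.exp_pos _
  have hT : 0 < T := Finset.sum_pos (fun k _ => hF k) Finset.univ_nonempty
  have hqstar_pos : ∀ k, 0 < qstar k := fun k => div_pos (hF k) hT
  have hqstar_sum : ∑ k, qstar k = 1 := by
    simp only [qstar, ← Finset.sum_div, ← hTdef]
    exact div_self hT.ne'
  -- the weights
  set w : ({m : U // m ≠ n} → K) → ℝ := fun z => ∏ m, q m.1 (z m) with hwdef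
  have hw : ∀ z, 0 < w z := fun z => Finset.prod_pos (fun m _ => hq m.1 m.2 _)
  have hw1 : ∑ z, w z = 1 := by
    have h := Finset.prod_univ_sum (fun _ : {m : U // m ≠ n} => (Finset.univ : Finset K))
      (fun m k => q m.1 k)
    rw [Fintype.piFinset_univ] at h
    rw [hwdef, ← h]
    refine Finset.prod_eq_one fun m _ => hq1 m.1 m.2
  set C : ℝ := ∑ z, w z * Real.log (w z) with hCdef
  -- product over the filter equals w
  have hP : ∀ y : U → K,
      (∏ m ∈ Finset.univ.filter (fun m => m ≠ n), q m (y m)) = w (fun m => y m.1) := by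
    intro y
    rw [Finset.prod_subtype (p := fun m => m ≠ n) (Finset.univ.filter fun m => m ≠ n)
      (fun m => by simp) (fun m => q m (y m))]
  have hext : ∀ y : U → K, ext (fun m => y m.1) (y n) = y := by
    intro y; funext m; simp only [ext]; split
    · subst ‹m = n›; rfl
    · rfl
  have hextn : ∀ z k, ext z k n = k := fun z k => by simp [ext]
  have hextm : ∀ z k (m : {m : U // m ≠ n}), ext z k m.1 = z m := by
    intro z k m; simp [ext, m.2]
  -- key reindexing identity
  have key : ∀ s : K → ℝ, (∀ k, 0 < s k) → ∑ k, s k = 1 →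
      Φ s = (∑ k, s k * (logF k - Real.log (s k))) - C := by
    intro s hs hs1
    have step1 : Φ s = ∑ p : K × ({m : U // m ≠ n} → K),
        (s p.1 * w p.2) * (Real.log (r (ext p.2 p.1)) - Real.log (s p.1 * w p.2)) := by
      refine Fintype.sum_equiv (Equiv.funSplitAt n K) _ _ fun y => ?_
      simp only [Equiv.funSplitAt, Equiv.piSplitAt, Equiv.coe_fn_mk]
      rw [hP y, hext y]
    rw [step1, Fintype.sum_prod_type]
    have step2 : ∀ k, (∑ z, (s k * w z) * (Real.log (r (ext z k)) - Real.log (s k * w z)))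
        = s k * logF k - s k * Real.log (s k) * (∑ z, w z) - s k * C := by
      intro k
      rw [hCdef, Finset.mul_sum, Finset.mul_sum, Finset.mul_sum, ← Finset.sum_sub_distrib,
        ← Finset.sum_sub_distrib]
      refine Finset.sum_congr rfl fun z _ => ?_
      rw [Real.log_mul (hs k).ne' (hw z).ne']
      ring
    calc (∑ k, ∑ z, (s k * w z) * (Real.log (r (ext z k)) - Real.log (s k * w z)))
        = ∑ k, (s k * logF k - s k * Real.log (s k) * (∑ z, w z) - s k * C) :=
          Finset.sum_congr rfl fun k _ => step2 k
      _ = ∑ k, (s k * (logF k - Real.log (s k)) - s k * C) := by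
          rw [hw1]; exact Finset.sum_congr rfl fun k _ => by ring
      _ = (∑ k, s k * (logF k - Real.log (s k))) - (∑ k, s k) * C := by
          rw [Finset.sum_sub_distrib, ← Finset.sum_mul]
      _ = (∑ k, s k * (logF k - Real.log (s k))) - C := by rw [hs1, one_mul]
  -- rewrite the inner sum via qstar
  have hlogF : ∀ k, logF k = Real.log (F k) := fun k => (Real.log_exp _).symm
  have hsplit : ∀ s : K → ℝ, (∀ k, 0 < s k) → ∑ k, s k = 1 →
      (∑ k, s k * (logF k - Real.log (s k)))
        = (∑ k, s k * Real.log (qstar k / s k)) + Real.log T := by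
    intro s hs hs1
    have : ∀ k, s k * (logF k - Real.log (s k))
        = s k * Real.log (qstar k / s k) + s k * Real.log T := by
      intro k
      have hFk : qstar k / s k * s k * T = F k := by
        rw [div_mul_cancel₀ _ (hs k).ne']
        simp only [qstar]
        rw [← hTdef, div_mul_cancel₀ _ hT.ne']
      rw [hlogF k, ← hFk,
        Real.log_mul (mul_pos (div_pos (hqstar_pos k) (hs k)) (hs k)).ne' hT.ne',
        Real.log_mul (div_pos (hqstar_pos k) (hs k)).ne' (hs k).ne']
      ring
    rw [Finset.sum_congr rfl fun k _ => this k, Finset.sum_add_distrib, ← Finset.sum_mul, hs1,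
      one_mul]
  have hAstar : (∑ k, qstar k * (logF k - Real.log (qstar k))) = Real.log T := by
    rw [hsplit qstar hqstar_pos hqstar_sum]
    have : ∀ k, qstar k * Real.log (qstar k / qstar k) = 0 := by
      intro k; rw [div_self (hqstar_pos k).ne', Real.log_one, mul_zero]
    rw [Finset.sum_congr rfl fun k _ => this k, Finset.sum_const_zero, zero_add]
  -- pointwise Gibbs inequality
  have hpt : ∀ s : K → ℝ, (∀ k, 0 < s k) → ∀ k,
      s k * Real.log (qstar k / s k) ≤ qstar k - s k := by
    intro s hs k
    have h1 : Real.log (qstar k / s k) ≤ qstar k / s k - 1 :=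
      Real.log_le_sub_one_of_pos (div_pos (hqstar_pos k) (hs k))
    calc s k * Real.log (qstar k / s k) ≤ s k * (qstar k / s k - 1) :=
          mul_le_mul_of_nonneg_left h1 (hs k).le
      _ = qstar k - s k := by rw [mul_sub, mul_one, mul_div_cancel₀ _ (hs k).ne']
  have hGibbs : ∀ s : K → ℝ, (∀ k, 0 < s k) → ∑ k, s k = 1 →
      (∑ k, s k * Real.log (qstar k / s k)) ≤ 0 := by
    intro s hs hs1
    calc (∑ k, s k * Real.log (qstar k / s k)) ≤ ∑ k, (qstar k - s k) :=
          Finset.sum_le_sum fun k _ => hpt s hs k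
      _ = 0 := by rw [Finset.sum_sub_distrib, hqstar_sum, hs1, sub_self]
  refine ⟨⟨hqstar_pos, hqstar_sum⟩, ?_, ?_, ?_⟩
  · -- maximality
    intro s hs hs1
    rw [key s hs hs1, key qstar hqstar_pos hqstar_sum, hsplit s hs hs1, hAstar]
    have := hGibbs s hs hs1
    linarith
  · -- uniqueness
    intro s hs hs1 hΦeq
    rw [key s hs hs1, key qstar hqstar_pos hqstar_sum, hsplit s hs hs1, hAstar] at hΦeq
    have hsum0 : (∑ k, s k * Real.log (qstar k / s k)) = 0 := by linarith
    have hsum0' : (∑ k, (s k * Real.log (qstar k / s k) - (qstar k - s k))) = 0 := by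
      rw [Finset.sum_sub_distrib, hsum0, Finset.sum_sub_distrib, hqstar_sum, hs1]; ring
    have hall := (Finset.sum_eq_zero_iff_of_nonpos
      (fun k _ => sub_nonpos.mpr (hpt s hs k))).mp hsum0'
    funext k
    by_contra hne
    have hne' : qstar k / s k ≠ 1 := by
      rw [Ne, div_eq_one_iff_eq (hs k).ne']
      exact fun h => hne h.symm
    have hlt : Real.log (qstar k / s k) < qstar k / s k - 1 :=
      Real.log_lt_sub_one_of_pos (div_pos (hqstar_pos k) (hs k)) hne'
    have hstrict : s k * Real.log (qstar k / s k) < qstar k - s k := by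
      calc s k * Real.log (qstar k / s k) < s k * (qstar k / s k - 1) :=
            (mul_lt_mul_iff_right₀ (hs k)).mpr hlt
        _ = qstar k - s k := by rw [mul_sub, mul_one, mul_div_cancel₀ _ (hs k).ne']
    have := hall k (Finset.mem_univ k)
    linarith
  · -- log form
    refine ⟨-Real.log T, fun k => ?_⟩
    have : Real.log (qstar k) = Real.log (F k) - Real.log T :=
      Real.log_div (hF k).ne' hT.ne'
    rw [this, hlogF k]; ring
end

section
/- Let G = (V, E) be a finite simple graph, K a nonempty finite type of labels, ψ_{ij} : K × K → ℝ strictly positive potentials with ψ_{ij}(a,b) = ψ_{ji}(b,a) for each edge, and p(y) = (1/Z) ∏_{{i,j}∈E} ψ_{ij}(y_i, y_j) the associated Gibbs distribution on y : V → K. Let L ⊆ V with fixed labels ℓ : L → K, let U = V ∖ L be nonempty, and let r : (U → K) → ℝ be the conditional distribution r(u) = p(ℓ ∪ u) / (∑_{u' : U → K} p(ℓ ∪ u')). Fix n ∈ U and, for each m ∈ U with m ≠ n, a strictly positive probability mass function q_m : K → ℝ. Then the unique maximizer q_n* of the negative KL divergence from the mean-field distribution u ↦ q_n(u_n) · ∏_{m∈U,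 m≠n} q_m(u_m) to r, over strictly positive probability mass functions q_n on K, satisfies for all k ∈ K: log q_n*(k) = ∑_{w : (NB(n)∩U) → K} (∏_{m∈NB(n)∩U} q_m(w_m)) · log p(Y_n = k | Y_{NB(n)} = ŷ_{NB(n)}(w)) + const, where ŷ_{NB(n)}(w) assigns w_m to unlabeled neighbors m ∈ NB(n)∩U and ℓ_m to labeled neighbors m ∈ NB(n)∩L, p(Y_n = k | Y_{NB(n)} = b) = (∏_{m∈NB(n)} ψ_{nm}(k, b_m)) / (∑_{k'∈K} ∏_{m∈NB(n)} ψ_{nm}(k', b_m)), and the constant is independent of k. -/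
/-!
Write a member of the mean-field family as `s (u n) * Q u`, where `Q` is the product of the
fixed factors `q m`, `m ≠ n`. Splitting off the coordinate `n`, the objective becomes
`∑ k, s k * (E k - log (s k)) + const`, where `E k` is the `Q`-expectation of `log r` with the
label `k` at `n`; by Gibbs' inequality it is uniquely maximized by `softmax E`, so
`log q* = E + const`. In `log r`, only the potentials on the edges at `n` see the label at `n`,
so up to a constant `E k` is the expectation of `∑ m ∈ NB(n), log ψ n m k (y m)`. This depends
only on the labels of the neighbours, so the factors `q m` of all other vertices integrate out,
and normalizing over `k` turns the local log-potential into `log p (y_n = k | y_NB(n))` at the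
cost of another constant.
-/

open Finset Real

def EqUpToConst {α : Type*} (f g : α → ℝ) : Prop := ∃ c, ∀ a, f a = g a + c

namespace EqUpToConst

variable {α : Type*} {f g h : α → ℝ}

theorem of_eq (hfg : ∀ a, f a = g a) : EqUpToConst f g := ⟨0, fun a => by rw [hfg, add_zero]⟩

theorem trans (hfg : EqUpToConst f g) (hgh : EqUpToConst g h) : EqUpToConst f h := by
  obtain ⟨c, hc⟩ := hfg
  obtain ⟨d, hd⟩ := hgh
  exact ⟨d + c, fun a => by rw [hc, hd, add_assoc]⟩

theorem comp {β : Type*} (hfg : EqUpToConst f g) (φ : β → α) : EqUpToConst (f ∘ φ) (g ∘ φ) :=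
  let ⟨c, hc⟩ := hfg
  ⟨c, fun b => hc (φ b)⟩

theorem sum_mul {ι : Type*} (s : Finset ι) (w : ι → ℝ) {F G : ι → α → ℝ}
    (hFG : ∀ i, EqUpToConst (F i) (G i)) :
    EqUpToConst (fun a => ∑ i ∈ s, w i * F i a) (fun a => ∑ i ∈ s, w i * G i a) := by
  choose c hc using hFG
  exact ⟨∑ i ∈ s, w i * c i, fun a => by simp only [hc, mul_add, sum_add_distrib]⟩

end EqUpToConst

theorem eqUpToConst_log_div_const {α : Type*} {a : α → ℝ} (ha : ∀ x, a x ≠ 0) {c : ℝ}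
    (hc : c ≠ 0) : EqUpToConst (fun x => log (a x / c)) (fun x => log (a x)) :=
  ⟨-log c, fun x => (log_div (ha x) hc).trans (sub_eq_add_neg _ _)⟩

theorem eqUpToConst_sum_log_normalized_prod {K M : Type*} [Fintype K] [Nonempty K]
    (s : Finset M) {φ : M → K → ℝ} (hφ : ∀ m ∈ s, ∀ k, 0 < φ m k) :
    EqUpToConst (fun k => ∑ m ∈ s, log (φ m k))
      (fun k => log ((∏ m ∈ s, φ m k) / ∑ k', ∏ m ∈ s, φ m k')) := by
  have hprod (k) : 0 < ∏ m ∈ s, φ m k := prod_pos fun m hm => hφ m hm k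
  refine ⟨log (∑ k', ∏ m ∈ s, φ m k'), fun k => ?_⟩
  beta_reduce
  rw [log_div (hprod k).ne' (sum_pos (fun k _ => hprod k) univ_nonempty).ne',
    log_prod fun m hm => (hφ m hm k).ne', sub_add_cancel]

theorem mul_sub_log_lt {s t : ℝ} (hs : 0 < s) (ht : 0 < t) (hst : s ≠ t) :
    s * (log t - log s) < t - s := by
  have hlog : log (t / s) < t / s - 1 :=
    log_lt_sub_one_of_pos (div_pos ht hs) (fun h => hst ((div_eq_one_iff_eq hs.ne').mp h).symm)
  calc s * (log t - log s) = s * log (t / s) := by rw [log_div ht.ne' hs.ne']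
    _ < s * (t / s - 1) := mul_lt_mul_of_pos_left hlog hs
    _ = t - s := by field_simp

theorem mul_sub_log_le {s t : ℝ} (hs : 0 < s) (ht : 0 < t) : s * (log t - log s) ≤ t - s := by
  rcases eq_or_ne s t with rfl | hst
  · simp
  · exact (mul_sub_log_lt hs ht hst).le

section Softmax

variable {K : Type*} [Fintype K]

noncomputable def softmax (g : K → ℝ) : K → ℝ := fun k => exp (g k) / ∑ k', exp (g k')

variable [Nonempty K] (g : K → ℝ)

theorem sum_exp_pos : 0 < ∑ k, exp (g k) := sum_pos (fun _ _ => exp_pos _) univ_nonempty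

theorem softmax_pos (k : K) : 0 < softmax g k := div_pos (exp_pos _) (sum_exp_pos g)

theorem sum_softmax : ∑ k, softmax g k = 1 := by
  simp only [softmax, ← sum_div, div_self (sum_exp_pos g).ne']

theorem log_softmax (k : K) : log (softmax g k) = g k - log (∑ k', exp (g k')) := by
  rw [softmax, log_div (exp_pos _).ne' (sum_exp_pos g).ne', log_exp]

theorem eqUpToConst_log_softmax : EqUpToConst (fun k => log (softmax g k)) g :=
  ⟨_, fun k => (log_softmax g k).trans (sub_eq_add_neg _ _)⟩

theorem sum_softmax_mul_sub_log :
    ∑ k, softmax g k * (g k - log (softmax g k)) = log (∑ k, exp (g k)) := by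
  simp only [log_softmax, sub_sub_cancel, ← sum_mul, sum_softmax, one_mul]

theorem sum_mul_sub_log_lt_of_ne_softmax {s : K → ℝ} (hs : ∀ k, 0 < s k) (hs1 : ∑ k, s k = 1)
    (hne : s ≠ softmax g) :
    ∑ k, s k * (g k - log (s k)) < log (∑ k, exp (g k)) := by
  obtain ⟨k₀, hk₀⟩ : ∃ k₀, s k₀ ≠ softmax g k₀ := Function.ne_iff.mp hne
  have hgap : ∑ k, s k * (log (softmax g k) - log (s k)) < ∑ k, (softmax g k - s k) :=
    sum_lt_sum (fun k _ => mul_sub_log_le (hs k) (softmax_pos g k))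
      ⟨k₀, mem_univ _, mul_sub_log_lt (hs k₀) (softmax_pos g k₀) hk₀⟩
  have hsplit : ∑ k, s k * (g k - log (s k))
      = ∑ k, s k * (log (softmax g k) - log (s k)) + log (∑ k, exp (g k)) := by
    simp only [log_softmax, mul_sub, sum_sub_distrib, ← sum_mul, hs1, one_mul]
    ring
  rw [sum_sub_distrib, sum_softmax, hs1, sub_self] at hgap
  linarith

theorem sum_mul_sub_log_le {s : K → ℝ} (hs : ∀ k, 0 < s k) (hs1 : ∑ k, s k = 1) :
    ∑ k, s k * (g k - log (s k)) ≤ log (∑ k, exp (g k)) := by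
  rcases eq_or_ne s (softmax g) with rfl | hne
  · exact (sum_softmax_mul_sub_log g).le
  · exact (sum_mul_sub_log_lt_of_ne_softmax g hs hs1 hne).le

theorem softmax_unique_maximizer {Φ : (K → ℝ) → ℝ} {H : ℝ}
    (hΦ : ∀ s, (∀ k, 0 < s k) → ∑ k, s k = 1 → Φ s = ∑ k, s k * (g k - log (s k)) + H) :
    (∀ s, (∀ k, 0 < s k) → ∑ k, s k = 1 → Φ s ≤ Φ (softmax g)) ∧
    (∀ s, (∀ k, 0 < s k) → ∑ k, s k = 1 →
      (∀ s', (∀ k, 0 < s' k) → ∑ k, s' k = 1 → Φ s' ≤ Φ s) → s = softmax g) := by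
  have hΦmax : Φ (softmax g) = log (∑ k, exp (g k)) + H := by
    rw [hΦ _ (softmax_pos g) (sum_softmax g), sum_softmax_mul_sub_log]
  refine ⟨fun s hs hs1 => ?_, fun s hs hs1 hmax => ?_⟩
  · rw [hΦ s hs hs1, hΦmax]
    linarith [sum_mul_sub_log_le g hs hs1]
  · by_contra hne
    have := hmax _ (softmax_pos g) (sum_softmax g)
    rw [hΦ s hs hs1, hΦmax] at this
    linarith [sum_mul_sub_log_lt_of_ne_softmax g hs hs1 hne]

end Softmax

theorem exists_meanField_objective_eq {I K : Type*} [Fintype I] [DecidableEq I] [Fintype K]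
    (n : I) {q : I → K → ℝ} (hq : ∀ m, m ≠ n → ∀ k, q m k ≠ 0) (hq1 : ∀ m, m ≠ n → ∑ k, q m k = 1)
    (f : (I → K) → ℝ) :
    ∃ H : ℝ, ∀ s : K → ℝ, (∀ k, s k ≠ 0) → ∑ k, s k = 1 →
      ∑ u : I → K, (s (u n) * ∏ m ∈ univ.filter (· ≠ n), q m (u m)) *
          (f u - log (s (u n) * ∏ m ∈ univ.filter (· ≠ n), q m (u m)))
        = ∑ k, s k * (∑ v : {m // m ≠ n} → K, (∏ m : {m // m ≠ n}, q m (v m)) *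
            f ((Equiv.funSplitAt n K).symm (k, v)) - log (s k)) + H := by
  set Q : ({m // m ≠ n} → K) → ℝ := fun v => ∏ m : {m // m ≠ n}, q m (v m) with hQ
  have hQ0 (v) : Q v ≠ 0 := prod_ne_zero_iff.mpr fun m _ => hq m m.2 _
  have hQ1 : ∑ v, Q v = 1 := by
    rw [hQ, ← Fintype.prod_sum fun (m : {m // m ≠ n}) k => q m k]
    exact prod_eq_one fun m _ => hq1 m m.2
  have hprod (u : I → K) : ∏ m ∈ univ.filter (· ≠ n), q m (u m) = Q fun m => u m :=
    prod_subtype _ (by simp) _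
  refine ⟨-∑ v, Q v * log (Q v), fun s hs hs1 => ?_⟩
  rw [← (Equiv.funSplitAt n K).symm.sum_comp, Fintype.sum_prod_type]
  have hsplit_n (k v) : (Equiv.funSplitAt n K).symm (k, v) n = k := by simp
  have hsplit_ne (k v) : (fun m : {m // m ≠ n} => (Equiv.funSplitAt n K).symm (k, v) m) = v := by
    funext m; simp [m.2]
  simp only [hprod, hsplit_n, hsplit_ne, log_mul (hs _) (hQ0 _), mul_sub, mul_add,
    sum_sub_distrib, sum_add_distrib, mul_assoc, ← mul_sum, ← sum_mul, hQ1, hs1, one_mul]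
  ring

section Marginal

variable {I K : Type*} [Fintype I] [DecidableEq I] [Fintype K]

theorem sum_prod_mul_restrict (P : I → Prop) [DecidablePred P] (q : I → K → ℝ)
    (hq : ∀ i, ¬ P i → ∑ k, q i k = 1) (F : ({i // P i} → K) → ℝ) :
    ∑ v : I → K, (∏ i, q i (v i)) * F (fun i => v i)
      = ∑ w : {i // P i} → K, (∏ i : {i // P i}, q i (w i)) * F w := by
  have hrest : ∑ x : {i // ¬ P i} → K, ∏ i : {i // ¬ P i}, q i (x i) = 1 := by
    rw [← Fintype.prod_sum (fun (i : {i // ¬ P i}) k => q i k)]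
    exact prod_eq_one fun i _ => hq i i.2
  rw [← (Equiv.piEquivPiSubtypeProd P fun _ => K).symm.sum_comp, Fintype.sum_prod_type]
  refine sum_congr rfl fun w _ => ?_
  simp only [Equiv.piEquivPiSubtypeProd_symm_apply, ← Fintype.prod_subtype_mul_prod_subtype P]
  have hP (i : {i // P i}) : P i := i.2
  have hnP (i : {i // ¬ P i}) : ¬ P i := i.2
  simp only [hP, hnP, dite_true, dite_false, Subtype.coe_eta, mul_right_comm _ _ (F w), ← mul_sum,
    hrest, mul_one]

theorem sum_prod_mul_comp_of_injective {J : Type*} [Fintype J] [DecidableEq J] {ι : J → I}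
    (hι : Function.Injective ι) (q : I → K → ℝ) (hq : ∀ i ∉ Set.range ι, ∑ k, q i k = 1)
    (F : (J → K) → ℝ) :
    ∑ v : I → K, (∏ i, q i (v i)) * F (v ∘ ι) = ∑ w : J → K, (∏ j, q (ι j) (w j)) * F w := by
  let e : J ≃ {i // ∃ j, ι j = i} := Equiv.ofInjective ι hι
  refine (sum_prod_mul_restrict (fun i => ∃ j, ι j = i) q hq fun x => F (x ∘ e)).trans ?_
  refine Fintype.sum_equiv (e.arrowCongr (Equiv.refl K)).symm _ _ fun x => ?_
  exact congrArg (· * F (x ∘ e)) (Fintype.prod_equiv e _ _ fun _ => rfl).symm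

end Marginal

theorem sum_incident_edges_eq_sum_neighborFinset {V M : Type*} [Fintype V] [LinearOrder V]
    [AddCommMonoid M] (G : SimpleGraph V) [DecidableRel G.Adj] {h : V → V → M}
    (hsymm : ∀ i j, G.Adj i j → h i j = h j i) (n : V) :
    ∑ e ∈ (univ.filter fun e : V × V => G.Adj e.1 e.2 ∧ e.1 < e.2).filter
        (fun e => e.1 = n ∨ e.2 = n), h e.1 e.2
      = ∑ m ∈ G.neighborFinset n, h n m := by
  refine sum_bij' (fun e _ => if e.1 = n then e.2 else e.1)
    (fun m _ => if n < m then (n, m) else (m, n)) ?_ ?_ ?_ ?_ ?_ <;>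
  simp only [mem_univ, true_and, mem_filter, SimpleGraph.mem_neighborFinset] <;>
  grind [SimpleGraph.Adj.symm, SimpleGraph.Adj.ne]

theorem eqUpToConst_log_prod_edges_update {V K : Type*} [Fintype V] [LinearOrder V]
    (G : SimpleGraph V) [DecidableRel G.Adj] {ψ : V → V → K → K → ℝ}
    (hpos : ∀ i j, G.Adj i j → ∀ a b, 0 < ψ i j a b)
    (hsymm : ∀ i j, G.Adj i j → ∀ a b, ψ i j a b = ψ j i b a) (y : V → K) (n : V) :
    EqUpToConst
      (fun k => log (∏ e ∈ univ.filter (fun e : V × V => G.Adj e.1 e.2 ∧ e.1 < e.2),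
        ψ e.1 e.2 (Function.update y n k e.1) (Function.update y n k e.2)))
      (fun k => ∑ m ∈ G.neighborFinset n, log (ψ n m k (y m))) := by
  refine ⟨∑ e ∈ (univ.filter fun e : V × V => G.Adj e.1 e.2 ∧ e.1 < e.2).filter
      (fun e => ¬(e.1 = n ∨ e.2 = n)), log (ψ e.1 e.2 (y e.1) (y e.2)), fun k => ?_⟩
  beta_reduce
  rw [log_prod fun e he => (hpos _ _ (mem_filter.mp he).2.1 _ _).ne',
    ← sum_filter_add_sum_filter_not _ (fun e => e.1 = n ∨ e.2 = n),
    sum_incident_edges_eq_sum_neighborFinset G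
      (h := fun i j => log (ψ i j (Function.update y n k i) (Function.update y n k j)))
      (fun i j hij => by rw [hsymm i j hij]) n]
  congr 1
  · refine sum_congr rfl fun m hm => ?_
    rw [Function.update_self, Function.update_of_ne ((G.mem_neighborFinset n m).mp hm).ne']
  · refine sum_congr rfl fun e he => ?_
    simp only [mem_filter, not_or] at he
    rw [Function.update_of_ne he.2.1, Function.update_of_ne he.2.2]

theorem dite_funSplitAt_symm_eq_update {V K : Type*} [DecidableEq V] {L : Finset V}
    (ℓ : {v // v ∈ L} → K) (n : {v // v ∉ L}) (k k' : K) (v : {m // m ≠ n} → K) :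
    (fun x => if h : x ∈ L then ℓ ⟨x, h⟩ else (Equiv.funSplitAt n K).symm (k, v) ⟨x, h⟩)
      = Function.update
          (fun x => if h : x ∈ L then ℓ ⟨x, h⟩ else (Equiv.funSplitAt n K).symm (k', v) ⟨x, h⟩)
          n.1 k := by
  funext x
  by_cases hx : x = n.1
  · subst hx; simp [n.2]
  · simp [hx, Subtype.ext_iff]

theorem gmnn_meanfield_optimality_general {V : Type*} [Fintype V] [LinearOrder V]
    {K : Type*} [Fintype K] [Nonempty K]
    (G : SimpleGraph V) [DecidableRel G.Adj]
    (ψ : V → V → K → K → ℝ)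
    (hpos : ∀ i j, G.Adj i j → ∀ a b, 0 < ψ i j a b)
    (hsymm : ∀ i j, G.Adj i j → ∀ a b, ψ i j a b = ψ j i b a)
    (L : Finset V) (ℓ : {v : V // v ∈ L} → K)
    (n : {v : V // v ∉ L})
    (q : {v : V // v ∉ L} → K → ℝ)
    (hq : ∀ m, m ≠ n → ∀ k, 0 < q m k)
    (hq1 : ∀ m, m ≠ n → ∑ k, q m k = 1) :
    let w : (V → K) → ℝ := fun y =>
      ∏ e ∈ Finset.univ.filter (fun e : V × V => G.Adj e.1 e.2 ∧ e.1 < e.2),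
        ψ e.1 e.2 (y e.1) (y e.2)
    let Z : ℝ := ∑ y : V → K, w y
    let p : (V → K) → ℝ := fun y => w y / Z
    let full : ({v : V // v ∉ L} → K) → (V → K) := fun u v =>
      if h : v ∈ L then ℓ ⟨v, h⟩ else u ⟨v, h⟩
    let r : ({v : V // v ∉ L} → K) → ℝ := fun u =>
      p (full u) / ∑ u' : {v : V // v ∉ L} → K, p (full u')
    let Φ : (K → ℝ) → ℝ := fun s =>
      ∑ u : {v : V // v ∉ L} → K,
        (s (u n) * ∏ m ∈ Finset.univ.filter (fun m => m ≠ n), q m (u m)) *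
          (Real.log (r u)
            - Real.log (s (u n) * ∏ m ∈ Finset.univ.filter (fun m => m ≠ n), q m (u m)))
    let pcond : K → (V → K) → ℝ := fun k b =>
      (∏ m ∈ G.neighborFinset n.1, ψ n.1 m k (b m))
        / ∑ k' : K, ∏ m ∈ G.neighborFinset n.1, ψ n.1 m k' (b m)
    let yhat : ({m : V // m ∈ G.neighborFinset n.1 ∧ m ∉ L} → K) → (V → K) := fun w0 v =>
      if h : v ∈ L then ℓ ⟨v, h⟩
      else if h2 : v ∈ G.neighborFinset n.1 ∧ v ∉ L then w0 ⟨v, h2⟩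
      else Classical.arbitrary K
    ∃ qstar : K → ℝ,
      ((∀ k, 0 < qstar k) ∧ ∑ k, qstar k = 1) ∧
      (∀ s : K → ℝ, (∀ k, 0 < s k) → ∑ k, s k = 1 → Φ s ≤ Φ qstar) ∧
      (∀ s : K → ℝ, (∀ k, 0 < s k) → ∑ k, s k = 1 →
        (∀ s' : K → ℝ, (∀ k, 0 < s' k) → ∑ k, s' k = 1 → Φ s' ≤ Φ s) → s = qstar) ∧
      (∃ c : ℝ, ∀ k : K,
        Real.log (qstar k)
          = (∑ w0 : {m : V // m ∈ G.neighborFinset n.1 ∧ m ∉ L} → K,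
              (∏ m, q ⟨m.1, m.2.2⟩ (w0 m)) * Real.log (pcond k (yhat w0))) + c) := by
  intro w Z p full r Φ pcond yhat
  have hw (y : V → K) : 0 < w y := prod_pos fun e he => hpos _ _ (mem_filter.mp he).2.1 _ _
  have hZ : 0 < Z := sum_pos (fun y _ => hw y) univ_nonempty
  have hS : 0 < ∑ u, p (full u) := sum_pos (fun u _ => div_pos (hw _) hZ) univ_nonempty
  have hr : EqUpToConst (fun u => Real.log (r u)) (fun u => Real.log (w (full u))) :=
    (eqUpToConst_log_div_const (fun _ => (div_pos (hw _) hZ).ne') hS.ne').trans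
      (eqUpToConst_log_div_const (fun _ => (hw _).ne') hZ.ne')
  set mk : K → ({m // m ≠ n} → K) → ({v : V // v ∉ L} → K) :=
    fun k v => (Equiv.funSplitAt n K).symm (k, v)
  set E : K → ℝ := fun k => ∑ v : {m // m ≠ n} → K,
    (∏ m : {m // m ≠ n}, q m (v m)) * Real.log (r (mk k v))
  obtain ⟨H, hΦ⟩ := exists_meanField_objective_eq n (fun m hm k => (hq m hm k).ne') hq1
    fun u => Real.log (r u)
  obtain ⟨hmax, huniq⟩ :=
    softmax_unique_maximizer E (Φ := Φ) fun s hs hs1 => hΦ s (fun k => (hs k).ne') hs1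
  refine ⟨softmax E, ⟨softmax_pos E, sum_softmax E⟩, hmax, huniq, ?_⟩
  have hadj {m : V} (hm : m ∈ G.neighborFinset n.1) : G.Adj n.1 m :=
    (G.mem_neighborFinset _ _).mp hm
  let k₀ := Classical.arbitrary K
  have hE : EqUpToConst E fun k => ∑ v : {m // m ≠ n} → K, (∏ m : {m // m ≠ n}, q m (v m)) *
      ∑ m ∈ G.neighborFinset n.1, Real.log (ψ n.1 m k (full (mk k₀ v) m)) :=
    EqUpToConst.sum_mul univ _ fun v => ((hr.comp (mk · v)).trans (.of_eq fun k =>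
      congrArg (fun y => Real.log (w y)) (dite_funSplitAt_symm_eq_update ℓ n k k₀ v))).trans
      (eqUpToConst_log_prod_edges_update G hpos hsymm _ _)
  let ι : {m : V // m ∈ G.neighborFinset n.1 ∧ m ∉ L} → {m // m ≠ n} :=
    fun m => ⟨⟨m.1, m.2.2⟩, fun h => (hadj m.2.1).ne' (congrArg Subtype.val h)⟩
  have hι : Function.Injective ι := fun a b h => Subtype.ext (congrArg (fun x => x.1.1) h)
  have hmarg (k) : ∑ v : {m // m ≠ n} → K, (∏ m : {m // m ≠ n}, q m (v m)) *
        ∑ m ∈ G.neighborFinset n.1, Real.log (ψ n.1 m k (full (mk k₀ v) m))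
      = ∑ w0 : {m : V // m ∈ G.neighborFinset n.1 ∧ m ∉ L} → K, (∏ m, q ⟨m.1, m.2.2⟩ (w0 m)) *
          ∑ m ∈ G.neighborFinset n.1, Real.log (ψ n.1 m k (yhat w0 m)) := by
    rw [← sum_prod_mul_comp_of_injective hι (fun m => q m) (fun m _ => hq1 m m.2)]
    refine sum_congr rfl fun v _ => congrArg _ (sum_congr rfl fun m hm => ?_)
    by_cases hL : m ∈ L
    · simp [full, yhat, hL]
    · simp [full, yhat, mk, hL, ι, Subtype.ext_iff, hadj hm, (hadj hm).ne']
  simp only [hmarg] at hE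
  exact (eqUpToConst_log_softmax E).trans (hE.trans (EqUpToConst.sum_mul univ _ fun w0 =>
    eqUpToConst_sum_log_normalized_prod _ fun m hm _ => hpos _ _ (hadj hm) _ _))

/-- GMNN Theorem 1 (optimality condition for the mean-field variational update in a
pairwise conditional random field): given a Gibbs distribution
`p y = (1/Z) ∏_{{i,j} ∈ E} ψ i j (y i) (y j)` on labelings of a finite graph, labeled
vertices `L` with labels `ℓ`, and fixed strictly positive mean-field factors `q m` for
unlabeled `m ≠ n`, the unique maximizer `q_n*` of the negative KL divergence from the
mean-field distribution to the conditional distribution `r = p(· | y_L = ℓ)` satisfies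
`log q_n*(k) = E_{q(y_{NB(n) ∩ U})} [log p (y_n = k | y_{NB(n)})] + const`. -/
theorem gmnn_meanfield_optimality {V : Type*} [Fintype V] [LinearOrder V]
    {K : Type*} [Fintype K] [Nonempty K]
    (G : SimpleGraph V) [DecidableRel G.Adj]
    (ψ : V → V → K → K → ℝ)
    (hpos : ∀ i j, G.Adj i j → ∀ a b, 0 < ψ i j a b)
    (hsymm : ∀ i j, G.Adj i j → ∀ a b, ψ i j a b = ψ j i b a)
    (L : Finset V) (ℓ : {v : V // v ∈ L} → K)
    (hU : Nonempty {v : V // v ∉ L})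
    (n : {v : V // v ∉ L})
    (q : {v : V // v ∉ L} → K → ℝ)
    (hq : ∀ m, m ≠ n → ∀ k, 0 < q m k)
    (hq1 : ∀ m, m ≠ n → ∑ k, q m k = 1) :
    let w : (V → K) → ℝ := fun y =>
      ∏ e ∈ Finset.univ.filter (fun e : V × V => G.Adj e.1 e.2 ∧ e.1 < e.2),
        ψ e.1 e.2 (y e.1) (y e.2)
    let Z : ℝ := ∑ y : V → K, w y
    let p : (V → K) → ℝ := fun y => w y / Z
    let full : ({v : V // v ∉ L} → K) → (V → K) := fun u v =>
      if h : v ∈ L then ℓ ⟨v, h⟩ else u ⟨v, h⟩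
    let r : ({v : V // v ∉ L} → K) → ℝ := fun u =>
      p (full u) / ∑ u' : {v : V // v ∉ L} → K, p (full u')
    let Φ : (K → ℝ) → ℝ := fun s =>
      ∑ u : {v : V // v ∉ L} → K,
        (s (u n) * ∏ m ∈ Finset.univ.filter (fun m => m ≠ n), q m (u m)) *
          (Real.log (r u)
            - Real.log (s (u n) * ∏ m ∈ Finset.univ.filter (fun m => m ≠ n), q m (u m)))
    let pcond : K → (V → K) → ℝ := fun k b =>
      (∏ m ∈ G.neighborFinset n.1, ψ n.1 m k (b m))
        / ∑ k' : K, ∏ m ∈ G.neighborFinset n.1, ψ n.1 m k' (b m)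
    let yhat : ({m : V // m ∈ G.neighborFinset n.1 ∧ m ∉ L} → K) → (V → K) := fun w0 v =>
      if h : v ∈ L then ℓ ⟨v, h⟩
      else if h2 : v ∈ G.neighborFinset n.1 ∧ v ∉ L then w0 ⟨v, h2⟩
      else Classical.arbitrary K
    ∃ qstar : K → ℝ,
      ((∀ k, 0 < qstar k) ∧ ∑ k, qstar k = 1) ∧
      (∀ s : K → ℝ, (∀ k, 0 < s k) → ∑ k, s k = 1 → Φ s ≤ Φ qstar) ∧
      (∀ s : K → ℝ, (∀ k, 0 < s k) → ∑ k, s k = 1 →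
        (∀ s' : K → ℝ, (∀ k, 0 < s' k) → ∑ k, s' k = 1 → Φ s' ≤ Φ s) → s = qstar) ∧
      (∃ c : ℝ, ∀ k : K,
        Real.log (qstar k)
          = (∑ w0 : {m : V // m ∈ G.neighborFinset n.1 ∧ m ∉ L} → K,
              (∏ m, q ⟨m.1, m.2.2⟩ (w0 m)) * Real.log (pcond k (yhat w0))) + c) :=
  gmnn_meanfield_optimality_general G ψ hpos hsymm L ℓ n q hq hq1
end
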